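/- Define F : ℝ → ℝ by F(α) = 4√(1+α) + 2√α if α ≤ α₀, F(α) = 4 + 2√(2α) if α₀ < α < 1/2, and F(α) = 2√(6(1+α)) if α ≥ 1/2, where α₀ = (688 − 480√2)/49. Then F has derivative 2 at the point 1/2 (i.e., HasDerivAt F 2 (1/2)), but the derivative function α ↦ deriv F α is not differentiable at 1/2. -/

import Mathlib

/-- The minimal ℓ¹ double bubble perimeter as a function of the area ratio `α`
(Theorem 1.1, part II). -/
noncomputable def doubleBubblePerimeter (α : ℝ) : ℝ :=
  if α ≤ (688 - 480 * Real.sqrt 2) / 49 then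
    4 * Real.sqrt (1 + α) + 2 * Real.sqrt α
  else if α < 1 / 2 then 4 + 2 * Real.sqrt (2 * α)
  else 2 * Real.sqrt (6 * (1 + α))

/-!
To the left of `1/2` the perimeter is the branch `4 + 2√(2α)`, to the right `2√(6(1+α))`.
Both branches take the value `6` and have slope `2` at `α = 1/2`, so `F` is differentiable
there; but their second derivatives at `1/2` are `-2` and `-2/3`, so the one-sided derivatives
of `F'` at `1/2` disagree.
-/

open Real Filter Set Topology

section OneSided

variable {f g h : ℝ → ℝ} {x a b : ℝ}

theorem Filter.EventuallyEq.deriv_of_isOpen {s : Set ℝ} (hs : IsOpen s)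
    (hfg : f =ᶠ[𝓝[s] x] g) : deriv f =ᶠ[𝓝[s] x] deriv g := by
  filter_upwards [eventually_eventually_nhdsWithin.2 hfg, self_mem_nhdsWithin] with y hy hys
  rw [hs.nhdsWithin_eq hys] at hy
  exact Filter.EventuallyEq.deriv_eq hy

theorem hasDerivAt_of_eventuallyEq_nhdsLT_nhdsGT (hfg : f =ᶠ[𝓝[<] x] g)
    (hfh : f =ᶠ[𝓝[>] x] h) (hgx : f x = g x) (hhx : f x = h x) (hg : HasDerivAt g a x)
    (hh : HasDerivAt h a x) : HasDerivAt f a x := by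
  have hl := hasDerivWithinAt_Iio_iff_Iic.1 (hg.hasDerivWithinAt.congr_of_eventuallyEq hfg hgx)
  have hr := hasDerivWithinAt_Ioi_iff_Ici.1 (hh.hasDerivWithinAt.congr_of_eventuallyEq hfh hhx)
  simpa only [Iic_union_Ici, hasDerivWithinAt_univ] using hl.union hr

theorem not_differentiableAt_of_eventuallyEq_nhdsLT_nhdsGT (hfg : f =ᶠ[𝓝[<] x] g)
    (hfh : f =ᶠ[𝓝[>] x] h) (hgx : f x = g x) (hhx : f x = h x) (hg : HasDerivAt g a x)
    (hh : HasDerivAt h b x) (hab : a ≠ b) : ¬ DifferentiableAt ℝ f x := by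
  intro hf
  have hl := hg.hasDerivWithinAt.congr_of_eventuallyEq hfg hgx
  have hr := hh.hasDerivWithinAt.congr_of_eventuallyEq hfh hhx
  have ha := (uniqueDiffWithinAt_Iio x).eq_deriv _ hl hf.hasDerivAt.hasDerivWithinAt
  have hb := (uniqueDiffWithinAt_Ioi x).eq_deriv _ hr hf.hasDerivAt.hasDerivWithinAt
  exact hab (ha.trans hb.symm)

end OneSided

noncomputable def sqrtBranch (c k p q α : ℝ) : ℝ := c + k * √(p * α + q)

section SqrtBranch

variable {c k p q x : ℝ}

theorem hasDerivAt_sqrtBranch (hx : 0 < p * x + q) :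
    HasDerivAt (sqrtBranch c k p q) (k * p / (2 * √(p * x + q))) x := by
  have hu : HasDerivAt (fun y => p * y + q) p x := by
    simpa using ((hasDerivAt_id x).const_mul p).add_const q
  exact (((hu.sqrt hx.ne').const_mul k).const_add c).congr_deriv (by ring)

theorem hasDerivAt_deriv_sqrtBranch (hx : 0 < p * x + q) :
    HasDerivAt (deriv (sqrtBranch c k p q))
      (-(k * p ^ 2) / (4 * (p * x + q) * √(p * x + q))) x := by
  have hderiv : deriv (sqrtBranch c k p q) =ᶠ[𝓝 x] fun y => k * p / 2 * (√(p * y + q))⁻¹ := by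
    have hopen : IsOpen {y | 0 < p * y + q} := isOpen_lt continuous_const (by fun_prop)
    filter_upwards [hopen.mem_nhds hx] with y hy
    rw [(hasDerivAt_sqrtBranch hy).deriv]
    ring
  have hu : HasDerivAt (fun y => p * y + q) p x := by
    simpa using ((hasDerivAt_id x).const_mul p).add_const q
  have hs : 0 < √(p * x + q) := Real.sqrt_pos.2 hx
  refine HasDerivAt.congr_of_eventuallyEq ?_ hderiv
  refine (((hu.sqrt hx.ne').inv hs.ne').const_mul (k * p / 2)).congr_deriv ?_
  rw [Real.sq_sqrt hx.le]
  field_simp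
  ring

end SqrtBranch

theorem first_transition_lt_half : (688 - 480 * √2) / 49 < (1 / 2 : ℝ) := by
  nlinarith [Real.sq_sqrt (zero_le_two : (0 : ℝ) ≤ 2), Real.sqrt_nonneg 2]

theorem doubleBubblePerimeter_eq_of_half_le {α : ℝ} (hα : 1 / 2 ≤ α) :
    doubleBubblePerimeter α = sqrtBranch 0 2 6 6 α := by
  rw [doubleBubblePerimeter, if_neg (first_transition_lt_half.trans_le hα).not_ge,
    if_neg hα.not_gt, sqrtBranch]
  ring_nf

theorem doubleBubblePerimeter_eventuallyEq_nhdsLT_half :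
    doubleBubblePerimeter =ᶠ[𝓝[<] (1 / 2)] sqrtBranch 4 2 2 0 := by
  filter_upwards [Ioo_mem_nhdsLT first_transition_lt_half] with α hα
  rw [doubleBubblePerimeter, if_neg hα.1.not_ge, if_pos hα.2, sqrtBranch, add_zero]

theorem doubleBubblePerimeter_eventuallyEq_nhdsGT_half :
    doubleBubblePerimeter =ᶠ[𝓝[>] (1 / 2)] sqrtBranch 0 2 6 6 :=
  eventually_nhdsWithin_of_forall fun _ hα => doubleBubblePerimeter_eq_of_half_le (le_of_lt hα)

/-- **Second phase transition (Corollary 1.2).** The minimal perimeter function `F` has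
derivative `2` at `α = 1/2`, but its derivative function is not differentiable there. -/
theorem second_phase_transition :
    HasDerivAt doubleBubblePerimeter 2 (1 / 2) ∧
      ¬ DifferentiableAt ℝ (deriv doubleBubblePerimeter) (1 / 2) := by
  have hpos₁ : (0 : ℝ) < 2 * (1 / 2) + 0 := by norm_num
  have hpos₉ : (0 : ℝ) < 6 * (1 / 2) + 6 := by norm_num
  have hsqrt₁ : √(2 * (1 / 2) + 0 : ℝ) = 1 := by norm_num
  have hsqrt₉ : √(6 * (1 / 2) + 6 : ℝ) = 3 := by
    rw [show (6 : ℝ) * (1 / 2) + 6 = 3 ^ 2 by norm_num, Real.sqrt_sq zero_le_three]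
  have hleft := doubleBubblePerimeter_eventuallyEq_nhdsLT_half
  have hright := doubleBubblePerimeter_eventuallyEq_nhdsGT_half
  have hval_right := doubleBubblePerimeter_eq_of_half_le (le_refl (1 / 2 : ℝ))
  have hval_left : doubleBubblePerimeter (1 / 2) = sqrtBranch 4 2 2 0 (1 / 2) := by
    rw [hval_right, sqrtBranch, sqrtBranch, hsqrt₁, hsqrt₉]
    norm_num
  have hderiv_left : HasDerivAt (sqrtBranch 4 2 2 0) 2 (1 / 2) :=
    (hasDerivAt_sqrtBranch hpos₁).congr_deriv (by rw [hsqrt₁]; norm_num)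
  have hderiv_right : HasDerivAt (sqrtBranch 0 2 6 6) 2 (1 / 2) :=
    (hasDerivAt_sqrtBranch hpos₉).congr_deriv (by rw [hsqrt₉]; norm_num)
  have hF := hasDerivAt_of_eventuallyEq_nhdsLT_nhdsGT hleft hright hval_left hval_right
    hderiv_left hderiv_right
  refine ⟨hF, not_differentiableAt_of_eventuallyEq_nhdsLT_nhdsGT
    (hleft.deriv_of_isOpen isOpen_Iio) (hright.deriv_of_isOpen isOpen_Ioi)
    (hF.deriv.trans hderiv_left.deriv.symm) (hF.deriv.trans hderiv_right.deriv.symm)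
    (hasDerivAt_deriv_sqrtBranch hpos₁) (hasDerivAt_deriv_sqrtBranch hpos₉) ?_⟩
  rw [hsqrt₁, hsqrt₉]
  norm_num
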